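/- In an MDP with deterministic transitions, the worst conditional value loss of any policy is attained at the initial state and stage: for every policy π ∈ Π, the maximum over ℓ ∈ {1,...,H} and s' ∈ S with p^π_ℓ(s') > 0 of (V*_ℓ(s') − V^π_ℓ(s')) equals V*_1(s1) − V^π_1(s1). -/

import Mathlib

/-- A finite episodic MDP with horizon `H`, initial state `s1`,
transition kernel `p h s a s'` and mean rewards `r h s a` (for stages `h ∈ {1,…,H}`). -/
structure MDP (S A : Type) [Fintype S] [Fintype A] where
  H : ℕ
  H_pos : 1 ≤ H
  s1 : S
  p : ℕ → S → A → S → ℝ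
  r : ℕ → S → A → ℝ
  p_nonneg : ∀ h s a s', 1 ≤ h → h ≤ H → 0 ≤ p h s a s'
  p_sum_one : ∀ h s a, 1 ≤ h → h ≤ H → ∑ s' : S, p h s a s' = 1
  r_nonneg : ∀ h s a, 1 ≤ h → h ≤ H → 0 ≤ r h s a
  r_le_one : ∀ h s a, 1 ≤ h → h ≤ H → r h s a ≤ 1

namespace MDP

variable {S A : Type} [Fintype S] [Fintype A] [DecidableEq S] [DecidableEq A]
variable (M : MDP S A)

/-- Fuel-indexed value of policy `π`: `polValAux M π k s = V^π_{H+1-k}(s)`. -/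
noncomputable def polValAux (π : ℕ → S → A) : ℕ → S → ℝ
  | 0, _ => 0
  | k + 1, s =>
      M.r (M.H - k) s (π (M.H - k) s) +
        ∑ s' : S, M.p (M.H - k) s (π (M.H - k) s) s' * polValAux π k s'

/-- `V^π_h(s)`, for `1 ≤ h ≤ H + 1`. -/
noncomputable def polVal (π : ℕ → S → A) (h : ℕ) (s : S) : ℝ :=
  M.polValAux π (M.H + 1 - h) s

/-- `Q^π_h(s,a)`. -/
noncomputable def polQ (π : ℕ → S → A) (h : ℕ) (s : S) (a : A) : ℝ :=
  M.r h s a + ∑ s' : S, M.p h s a s' * M.polVal π (h + 1) s'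

/-- Fuel-indexed optimal value: `optValAux M k s = V*_{H+1-k}(s)`. -/
noncomputable def optValAux : ℕ → S → ℝ
  | 0, _ => 0
  | k + 1, s =>
      ⨆ a : A, (M.r (M.H - k) s a + ∑ s' : S, M.p (M.H - k) s a s' * optValAux k s')

/-- `V*_h(s)`, for `1 ≤ h ≤ H + 1`. -/
noncomputable def optVal (h : ℕ) (s : S) : ℝ := M.optValAux (M.H + 1 - h) s

/-- `Q*_h(s,a)`. -/
noncomputable def optQ (h : ℕ) (s : S) (a : A) : ℝ :=
  M.r h s a + ∑ s' : S, M.p h s a s' * M.optVal (h + 1) s'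

/-- Visitation probability `p^π_h(s)`, for `1 ≤ h ≤ H`. -/
noncomputable def visit (π : ℕ → S → A) : ℕ → S → ℝ
  | 0, _ => 0
  | 1, s => if s = M.s1 then 1 else 0
  | h + 2, s' => ∑ s : S, visit π (h + 1) s * M.p (h + 1) s (π (h + 1) s) s'

/-- State-action visitation probability `p^π_h(s,a)`. -/
noncomputable def visitSA (π : ℕ → S → A) (h : ℕ) (s : S) (a : A) : ℝ :=
  if π h s = a then M.visit π h s else 0

/-- Fuel-indexed conditional visitation: `cvisitAux M π s h k s' = p^π_{h+k}(s' | s, h)`. -/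
noncomputable def cvisitAux (π : ℕ → S → A) (s : S) (h : ℕ) : ℕ → S → ℝ
  | 0, s' => if s' = s then 1 else 0
  | k + 1, s' =>
      ∑ s'' : S, cvisitAux π s h k s'' * M.p (h + k) s'' (π (h + k) s'') s'

/-- Conditional visitation probability `p^π_ℓ(s' | s, h)`, for `h ≤ ℓ`. -/
noncomputable def cvisit (π : ℕ → S → A) (s : S) (h ℓ : ℕ) (s' : S) : ℝ :=
  M.cvisitAux π s h (ℓ - h) s'

/-- Value gap `Δ_h(s,a) = V*_h(s) - Q*_h(s,a)`. -/
noncomputable def valGap (h : ℕ) (s : S) (a : A) : ℝ := M.optVal h s - M.optQ h s a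

/-- The worst conditional value loss of policy `π`:
`max_{ℓ ∈ [H]} max_{s' : p^π_ℓ(s') > 0} (V*_ℓ(s') - V^π_ℓ(s'))`. -/
noncomputable def condRetGap (π : ℕ → S → A) : ℝ :=
  sSup {x : ℝ | ∃ ℓ, 1 ≤ ℓ ∧ ℓ ≤ M.H ∧ ∃ s' : S,
    M.visit π ℓ s' > 0 ∧ x = M.optVal ℓ s' - M.polVal π ℓ s'}

/-- Conditional return gap `Δtilde_h(s,a)`. -/
noncomputable def tildeGap (h : ℕ) (s : S) (a : A) : ℝ :=
  sInf {x : ℝ | ∃ π : ℕ → S → A, M.visitSA π h s a > 0 ∧ x = M.condRetGap π}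

/-- Return gap `Δbar_h(s,a) = V*_1(s1) - max_{π : p^π_h(s,a) > 0} V^π_1(s1)`. -/
noncomputable def barGap (h : ℕ) (s : S) (a : A) : ℝ :=
  M.optVal 1 M.s1 -
    sSup {x : ℝ | ∃ π : ℕ → S → A, M.visitSA π h s a > 0 ∧ x = M.polVal π 1 M.s1}

end MDP

/-!
Along a deterministic transition `s → s'` taken by `π` at stage `h`, the Bellman equations give
`V*_h(s) - V^π_h(s) ≥ Q*_h(s, π_h s) - Q^π_h(s, π_h s) = V*_{h+1}(s') - V^π_{h+1}(s')`.
With deterministic dynamics the states reachable under `π` form a single trajectory from `s1`,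
so the value loss can only decrease along it and is largest at `(1, s1)`.
-/

namespace MDP

variable {S A : Type} [Fintype S] [Fintype A] (M : MDP S A)

section Bellman

variable {h : ℕ} (h1 : 1 ≤ h) (hH : h ≤ M.H)
include h1 hH

theorem polVal_eq_polQ (π : ℕ → S → A) (s : S) : M.polVal π h s = M.polQ π h s (π h s) := by
  have hk : M.H + 1 - h = M.H - h + 1 := by omega
  have hh : M.H - (M.H - h) = h := by omega
  have hk' : M.H + 1 - (h + 1) = M.H - h := by omega
  simp only [polVal, polQ, hk, hk', polValAux, hh]

theorem optVal_eq_iSup_optQ (s : S) : M.optVal h s = ⨆ a, M.optQ h s a := by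
  have hk : M.H + 1 - h = M.H - h + 1 := by omega
  have hh : M.H - (M.H - h) = h := by omega
  have hk' : M.H + 1 - (h + 1) = M.H - h := by omega
  simp only [optVal, optQ, hk, hk', optValAux, hh]

theorem optQ_le_optVal (s : S) (a : A) : M.optQ h s a ≤ M.optVal h s := by
  rw [M.optVal_eq_iSup_optQ h1 hH]
  exact le_ciSup (Set.finite_range _).bddAbove a

theorem sum_p_mul_valueLoss_succ_le (π : ℕ → S → A) (s : S) :
    ∑ s', M.p h s (π h s) s' * (M.optVal (h + 1) s' - M.polVal π (h + 1) s') ≤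
      M.optVal h s - M.polVal π h s := by
  have hQ := M.optQ_le_optVal h1 hH s (π h s)
  rw [M.polVal_eq_polQ h1 hH]
  simp only [optQ, polQ] at hQ ⊢
  simp only [mul_sub, Finset.sum_sub_distrib]
  linarith

theorem p_eq_zero_of_p_eq_one {s s' t : S} {a : A} (hs' : M.p h s a s' = 1) (ht : t ≠ s') :
    M.p h s a t = 0 := by
  classical
  have hpair : M.p h s a s' + M.p h s a t ≤ ∑ u, M.p h s a u := by
    rw [← Finset.sum_pair ht.symm]
    exact Finset.sum_le_sum_of_subset_of_nonneg (Finset.subset_univ _)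
      fun u _ _ => M.p_nonneg h s a u h1 hH
  rw [M.p_sum_one h s a h1 hH, hs'] at hpair
  exact le_antisymm (by linarith) (M.p_nonneg h s a t h1 hH)

theorem sum_p_mul_eq_of_p_eq_one {s s' : S} {a : A} (hs' : M.p h s a s' = 1) (g : S → ℝ) :
    ∑ t, M.p h s a t * g t = g s' := by
  rw [Finset.sum_eq_single s' (fun t _ ht => by rw [M.p_eq_zero_of_p_eq_one h1 hH hs' ht, zero_mul])
    (fun hs => absurd (Finset.mem_univ s') hs), hs', one_mul]

end Bellman

variable [DecidableEq S]

theorem visit_one (π : ℕ → S → A) (s : S) : M.visit π 1 s = if s = M.s1 then 1 else 0 := rfl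

theorem visit_succ (π : ℕ → S → A) {h : ℕ} (h1 : 1 ≤ h) (s' : S) :
    M.visit π (h + 1) s' = ∑ s, M.visit π h s * M.p h s (π h s) s' := by
  obtain ⟨k, rfl⟩ := Nat.exists_eq_add_of_le' h1
  rfl

theorem valueLoss_le_initial_of_visit_ne_zero
    (hdet : ∀ h s a, 1 ≤ h → h ≤ M.H → ∃ s' : S, M.p h s a s' = 1) (π : ℕ → S → A)
    {ℓ : ℕ} (h1 : 1 ≤ ℓ) (hH : ℓ ≤ M.H) {s : S} (hs : M.visit π ℓ s ≠ 0) :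
    M.optVal ℓ s - M.polVal π ℓ s ≤ M.optVal 1 M.s1 - M.polVal π 1 M.s1 := by
  induction ℓ, h1 using Nat.le_induction generalizing s with
  | base =>
    obtain rfl : s = M.s1 := by simpa [visit_one] using hs
    rfl
  | succ h h1 ih =>
    obtain ⟨t, ht, hts⟩ : ∃ t, M.visit π h t ≠ 0 ∧ M.p h t (π h t) s ≠ 0 := by
      rw [M.visit_succ π h1] at hs
      obtain ⟨t, -, hne⟩ := Finset.exists_ne_zero_of_sum_ne_zero hs
      exact ⟨t, left_ne_zero_of_mul hne, right_ne_zero_of_mul hne⟩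
    have hHh : h ≤ M.H := by omega
    have hp : M.p h t (π h t) s = 1 := by
      obtain ⟨s', hs'⟩ := hdet h t (π h t) h1 hHh
      obtain rfl : s = s' := by_contra fun hne => hts (M.p_eq_zero_of_p_eq_one h1 hHh hs' hne)
      exact hs'
    calc M.optVal (h + 1) s - M.polVal π (h + 1) s
        = ∑ s', M.p h t (π h t) s' * (M.optVal (h + 1) s' - M.polVal π (h + 1) s') :=
          (M.sum_p_mul_eq_of_p_eq_one h1 hHh hp
            fun s' => M.optVal (h + 1) s' - M.polVal π (h + 1) s').symm
      _ ≤ M.optVal h t - M.polVal π h t := M.sum_p_mul_valueLoss_succ_le h1 hHh π t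
      _ ≤ _ := ih hHh ht

end MDP

theorem condRetGap_eq_initial_of_deterministic_general {S A : Type} [Fintype S]
    [Fintype A] [DecidableEq S] (M : MDP S A)
    (hdet : ∀ h s a, 1 ≤ h → h ≤ M.H → ∃ s' : S, M.p h s a s' = 1)
    (π : ℕ → S → A) :
    M.condRetGap π = M.optVal 1 M.s1 - M.polVal π 1 M.s1 := by
  refine IsGreatest.csSup_eq ⟨⟨1, le_rfl, M.H_pos, M.s1, by simp [MDP.visit_one], rfl⟩, ?_⟩
  rintro x ⟨ℓ, h1, hH, s, hs, rfl⟩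
  exact M.valueLoss_le_initial_of_visit_ne_zero hdet π h1 hH hs.ne'

/-- In an MDP with deterministic transitions, the worst conditional value loss of any policy
is attained at the initial state and stage. -/
theorem condRetGap_eq_initial_of_deterministic {S A : Type} [Fintype S] [Nonempty S]
    [Fintype A] [Nonempty A] [DecidableEq S] [DecidableEq A] (M : MDP S A)
    (hdet : ∀ h s a, 1 ≤ h → h ≤ M.H → ∃ s' : S, M.p h s a s' = 1)
    (π : ℕ → S → A) :
    M.condRetGap π = M.optVal 1 M.s1 - M.polVal π 1 M.s1 :=
  condRetGap_eq_initial_of_deterministic_general M hdet π
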